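/- arXiv:1211.7188 — 4 statements merged into one kernel-verified Lean document; each statement's English description precedes it below -/
import Mathlib

section
/- For real numbers x, y, H with H > 0, the equation √(x² + y²) + √(x² + (y − H)²) = H + 2 holds if and only if (y + 2 + 2/H)² − (x² + y²)·(1 + 4/H + 4/H²) = 0. -/
set_option maxHeartbeats 800000


theorem ellipse_eq_iff_rationalized (x y H : ℝ) (hH : 0 < H) :
    Real.sqrt (x ^ 2 + y ^ 2) + Real.sqrt (x ^ 2 + (y - H) ^ 2) = H + 2 ↔
    (y + 2 + 2 / H) ^ 2 - (x ^ 2 + y ^ 2) * (1 + 4 / H + 4 / H ^ 2) = 0 := by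
  have hHn : H ≠ 0 := ne_of_gt hH
  set d1 := Real.sqrt (x ^ 2 + y ^ 2) with hd1def
  set d2 := Real.sqrt (x ^ 2 + (y - H) ^ 2) with hd2def
  have hd1 : d1 ^ 2 = x ^ 2 + y ^ 2 := Real.sq_sqrt (by positivity)
  have hd2 : d2 ^ 2 = x ^ 2 + (y - H) ^ 2 := Real.sq_sqrt (by positivity)
  have hd1n : 0 ≤ d1 := Real.sqrt_nonneg _
  have hd2n : 0 ≤ d2 := Real.sqrt_nonneg _
  have hy1 : |y| ≤ d1 := by
    rw [hd1def, ← Real.sqrt_sq_eq_abs]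
    exact Real.sqrt_le_sqrt (by nlinarith [sq_nonneg x])
  have hy2 : |y - H| ≤ d2 := by
    rw [hd2def, ← Real.sqrt_sq_eq_abs]
    exact Real.sqrt_le_sqrt (by nlinarith [sq_nonneg x])
  have hy1' : -y ≤ d1 := (neg_le_abs y).trans hy1
  have hy2' : y - H ≤ d2 := (le_abs_self _).trans hy2
  have t1 : d2 ≤ d1 + H := by
    rw [← Real.sqrt_sq (by positivity : (0:ℝ) ≤ d1 + H), hd2def]
    exact Real.sqrt_le_sqrt (by nlinarith)
  have t2 : d1 ≤ d2 + H := by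
    rw [← Real.sqrt_sq (by positivity : (0:ℝ) ≤ d2 + H), hd1def]
    exact Real.sqrt_le_sqrt (by nlinarith)
  have e1 : d2 ^ 2 - d1 ^ 2 = H ^ 2 - 2 * H * y := by rw [hd1, hd2]; ring
  have key : (y + 2 + 2 / H) ^ 2 - (x ^ 2 + y ^ 2) * (1 + 4 / H + 4 / H ^ 2) =
      ((H * y + 2 * H + 2) ^ 2 - d1 ^ 2 * (H + 2) ^ 2) / H ^ 2 := by
    rw [hd1]; field_simp; ring
  rw [key, div_eq_zero_iff]
  have hH2 : (H : ℝ) ^ 2 ≠ 0 := pow_ne_zero _ hHn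
  have hHp2 : (H + 2 : ℝ) ≠ 0 := by positivity
  constructor
  · intro h
    have hd2' : d2 = H + 2 - d1 := by linarith
    rw [hd2'] at e1
    have h2 : d1 * (H + 2) = H * y + 2 * H + 2 := by linear_combination (-(1:ℝ)/2) * e1
    left
    linear_combination (-(d1 * (H + 2) + (H * y + 2 * H + 2))) * h2
  · rintro (hk | hk)
    · have split1 : (d1 * (H + 2) - (H * y + 2 * H + 2)) *
          (d1 * (H + 2) + (H * y + 2 * H + 2)) = 0 := by linear_combination -hk
      have e2 : (d2 * (H + 2)) ^ 2 = (H ^ 2 + 2 * H + 2 - H * y) ^ 2 := by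
        linear_combination (H + 2) ^ 2 * e1 - hk
      have split2 : (d2 * (H + 2) - (H ^ 2 + 2 * H + 2 - H * y)) *
          (d2 * (H + 2) + (H ^ 2 + 2 * H + 2 - H * y)) = 0 := by linear_combination e2
      rcases mul_eq_zero.mp split1 with hA | hB <;>
        rcases mul_eq_zero.mp split2 with hC | hD
      · have : (d1 + d2) * (H + 2) = (H + 2) * (H + 2) := by linarith
        have := mul_right_cancel₀ hHp2 this
        linarith
      · exfalso
        have h3 : (d1 - d2) * (H + 2) ≤ H * (H + 2) :=
          mul_le_mul_of_nonneg_right (by linarith) (by linarith)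
        linarith [h3, hH]
      · exfalso
        have h3 : (d2 - d1) * (H + 2) ≤ H * (H + 2) :=
          mul_le_mul_of_nonneg_right (by linarith) (by linarith)
        linarith [h3, hH]
      · exfalso
        have h3 : 0 ≤ (d1 + d2) * (H + 2) :=
          mul_nonneg (by linarith) (by linarith)
        have h4 : (d1 + d2) * (H + 2) = -(H + 2) ^ 2 := by linear_combination hB + hD
        have h5 : (0:ℝ) < (H + 2) ^ 2 := by positivity
        linarith [h3, h4, h5]
    · exact absurd hk hH2
end

section
/- Let H be an infinite hyperreal and let x, y be hyperreals that are not infinite. Then the standard part of (y + 2 + 2/H)² − (x² + y²)·(1 + 4/H + 4/H²) equals (st y + 2)² − ((st x)² + (st y)²). -/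
open Hyperreal

theorem st_status_transitus (H x y : ℝ*) (hH : Infinite H)
    (hx : ¬ Infinite x) (hy : ¬ Infinite y) :
    st ((y + 2 + 2 / H) ^ 2 - (x ^ 2 + y ^ 2) * (1 + 4 / H + 4 / H ^ 2)) =
      (st y + 2) ^ 2 - ((st x) ^ 2 + (st y) ^ 2) := by
  have hxs : IsSt x (st x) := isSt_st' hx
  have hys : IsSt y (st y) := isSt_st' hy
  have hinv : IsSt H⁻¹ 0 := infinitesimal_inv_of_infinite hH
  have h2H : IsSt (2 / H) 0 := by
    have := (isSt_refl_real 2).mul hinv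
    simpa [div_eq_mul_inv] using this
  have h4H : IsSt (4 / H) 0 := by
    have := (isSt_refl_real 4).mul hinv
    simpa [div_eq_mul_inv] using this
  have h4H2 : IsSt (4 / H ^ 2) 0 := by
    have := ((isSt_refl_real 4).mul hinv).mul hinv
    have e : (4 : ℝ*) / H ^ 2 = 4 * H⁻¹ * H⁻¹ := by ring
    simpa [e] using this
  have h2 : IsSt (2 : ℝ*) 2 := by exact_mod_cast isSt_refl_real 2
  have h1 : IsSt (1 : ℝ*) 1 := by exact_mod_cast isSt_refl_real 1
  have key : IsSt ((y + 2 + 2 / H) ^ 2 - (x ^ 2 + y ^ 2) * (1 + 4 / H + 4 / H ^ 2))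
      ((st y + 2) ^ 2 - ((st x) ^ 2 + (st y) ^ 2)) := by
    have hb : IsSt (y + 2 + 2 / H) (st y + 2) := by
      simpa using (hys.add h2).add h2H
    have hsq : IsSt ((y + 2 + 2 / H) ^ 2) ((st y + 2) ^ 2) := by
      simpa [sq] using hb.mul hb
    have hxy : IsSt (x ^ 2 + y ^ 2) ((st x) ^ 2 + (st y) ^ 2) := by
      simpa [sq] using (hxs.mul hxs).add (hys.mul hys)
    have hc : IsSt (1 + 4 / H + 4 / H ^ 2) 1 := by
      simpa using (h1.add h4H).add h4H2
    have := hsq.sub (hxy.mul hc)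
    simpa using this
  exact key.st_eq
end

section
/- Let H be an infinite hyperreal and let x, y be hyperreals that are not infinite. If (y + 2 + 2/H)² = (x² + y²)·(1 + 4/H + 4/H²), then st y = (st x)²/4 − 1; that is, the shadow (st x, st y) of the point (x, y) lies on the real parabola y₀ = x₀²/4 − 1. -/
open Hyperreal

theorem shadow_on_parabola (H x y : ℝ*) (hH : Infinite H)
    (hx : ¬ Infinite x) (hy : ¬ Infinite y)
    (heq : (y + 2 + 2 / H) ^ 2 = (x ^ 2 + y ^ 2) * (1 + 4 / H + 4 / H ^ 2)) :
    st y = (st x) ^ 2 / 4 - 1 := by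
  have hHi : Infinitesimal H⁻¹ := infinitesimal_inv_of_infinite hH
  have hstHi : st H⁻¹ = 0 := by rw [st_inv, hH.st_eq]; simp
  have h2 : ¬ Infinite (2 : ℝ*) := by
    have := not_infinite_real 2; simpa using this
  have h4 : ¬ Infinite (4 : ℝ*) := by
    have := not_infinite_real 4; simpa using this
  have h1 : ¬ Infinite (1 : ℝ*) := by
    have := not_infinite_real 1; simpa using this
  have hst2 : st (2 : ℝ*) = 2 := by
    have := st_id_real 2; simpa using this
  have hst4 : st (4 : ℝ*) = 4 := by
    have := st_id_real 4; simpa using this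
  have hst1 : st (1 : ℝ*) = 1 := by
    have := st_id_real 1; simpa using this
  have h2H : ¬ Hyperreal.Infinite (2 / H) := by
    rw [div_eq_mul_inv]; exact not_infinite_mul h2 hHi.not_infinite
  have hst2H : st (2 / H) = 0 := by
    rw [div_eq_mul_inv, st_mul h2 hHi.not_infinite, hstHi, mul_zero]
  have h4H : ¬ Hyperreal.Infinite (4 / H) := by
    rw [div_eq_mul_inv]; exact not_infinite_mul h4 hHi.not_infinite
  have hst4H : st (4 / H) = 0 := by
    rw [div_eq_mul_inv, st_mul h4 hHi.not_infinite, hstHi, mul_zero]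
  have h4H2 : ¬ Hyperreal.Infinite (4 / H ^ 2) := by
    rw [div_eq_mul_inv, pow_two, mul_inv]
    exact not_infinite_mul h4 (not_infinite_mul hHi.not_infinite hHi.not_infinite)
  have hst4H2 : st (4 / H ^ 2) = 0 := by
    rw [div_eq_mul_inv, pow_two, mul_inv,
      st_mul h4 (not_infinite_mul hHi.not_infinite hHi.not_infinite),
      st_mul hHi.not_infinite hHi.not_infinite, hstHi, mul_zero, mul_zero]
  have hL : ¬ Hyperreal.Infinite (y + 2 + 2 / H) :=
    not_infinite_add (not_infinite_add hy h2) h2H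
  have hR2 : ¬ Hyperreal.Infinite (x ^ 2 + y ^ 2) := by
    rw [pow_two, pow_two]
    exact not_infinite_add (not_infinite_mul hx hx) (not_infinite_mul hy hy)
  have key : (st y + 2) ^ 2 = (st x ^ 2 + st y ^ 2) * 1 := by
    have hst := congrArg st heq
    rw [pow_two, st_mul hL hL, st_add (not_infinite_add hy h2) h2H,
      st_add hy h2, hst2, hst2H, add_zero, ← pow_two] at hst
    rw [st_mul hR2 (not_infinite_add (not_infinite_add h1 h4H) h4H2),
      st_add (not_infinite_add h1 h4H) h4H2,
      st_add h1 h4H, hst1, hst4H, hst4H2, add_zero, add_zero] at hst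
    have hx2 : ¬ Hyperreal.Infinite (x ^ 2) := by rw [pow_two]; exact not_infinite_mul hx hx
    have hy2 : ¬ Hyperreal.Infinite (y ^ 2) := by rw [pow_two]; exact not_infinite_mul hy hy
    rw [st_add hx2 hy2] at hst
    rw [show (x ^ 2).st = x.st ^ 2 by rw [pow_two, st_mul hx hx, ← pow_two],
      show (y ^ 2).st = y.st ^ 2 by rw [pow_two, st_mul hy hy, ← pow_two]] at hst
    exact hst
  nlinarith [key]
end

section
/- Let a, x, v, dx, dv, dy be hyperreals with a ≠ 0, dx ≠ 0, and dv infinitesimal. If a·dy = (x + dx)(v + dv) − x·v, then a·(dy/dx) = x·(dv/dx) + v + dv, and consequently a·(dy/dx) − (x·(dv/dx) + v) is infinitesimal. -/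
open Hyperreal

theorem leibniz_multiplicative_law (a x v dx dv dy : ℝ*)
    (ha : a ≠ 0) (hdx : dx ≠ 0) (hdv : Infinitesimal dv)
    (h : a * dy = (x + dx) * (v + dv) - x * v) :
    a * (dy / dx) = x * (dv / dx) + v + dv ∧
      Infinitesimal (a * (dy / dx) - (x * (dv / dx) + v)) := by
  have heq : a * (dy / dx) = x * (dv / dx) + v + dv := by
    field_simp
    ring_nf
    ring_nf at h
    linear_combination h
  refine ⟨heq, ?_⟩
  have : a * (dy / dx) - (x * (dv / dx) + v) = dv := by rw [heq]; ring
  rwa [this]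
end
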